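/- Let X be an abstract simplicial complex on a node set N and let A be its activation sheaf. For n ∈ N write R(n) = {c ∈ X : there exists d ∈ X with c ⊆ d and n ∈ d}. Then the map sending a global section s of A to the set M(s) = {n ∈ N : active(s,n) ≠ ∅} is a bijection between the global sections of A and the sets M ⊆ N of vertices of X such that R(m) ∩ R(n) = ∅ for all distinct m, n ∈ M; the inverse sends such a set M to the section s defined by s(c) = n if c ∈ R(n) for some (necessarily unique) n ∈ M, and s(c) = ⊥ otherwise. (Global sections of the activation sheaf are exactly the sets of nodes that can transmit simultaneously without interference.) -/

import Mathlib

open scoped Classical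

/-- The stalk (without the distinguished symbol `⊥`) of the activation sheaf at a cell
`c` of the complex `X`: the set of nodes having a coface in common with `c`. -/
def stalk {N : Type*} (X : Set (Finset N)) (c : Finset N) : Set N :=
  {n | ∃ d ∈ X, c ⊆ d ∧ n ∈ d}

/-- The restriction map of the activation sheaf along `c ⊆ d`, acting on `Option N`
where `none` plays the role of `⊥`. -/
noncomputable def restrict {N : Type*} (X : Set (Finset N)) (d : Finset N) :
    Option N → Option N :=
  fun x => x.bind fun n => if n ∈ stalk X d then some n else none

/-- A global section of the activation sheaf, as a function on the cells of `X`
(the subtype `{c // c ∈ X}`): values lie in the stalks and are compatible with all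
the restriction maps. -/
def IsGlobalSection {N : Type*} (X : Set (Finset N))
    (s : {c : Finset N // c ∈ X} → Option N) : Prop :=
  (∀ c : {c : Finset N // c ∈ X}, ∀ n : N, s c = some n → n ∈ stalk X c.1) ∧
  (∀ c d : {c : Finset N // c ∈ X}, c.1 ⊆ d.1 → restrict X d.1 (s c) = s d)

/-- `Rset X n` is the set of all cells of `X` having a common coface with the vertex
`{n}`; it is the region of influence `R(n)` of the node `n`. -/
def Rset {N : Type*} (X : Set (Finset N)) (n : N) : Set (Finset N) :=
  {c | c ∈ X ∧ ∃ d ∈ X, c ⊆ d ∧ n ∈ d}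

lemma restrict_eq_some {N : Type*} (X : Set (Finset N)) (d : Finset N)
    (x : Option N) (n : N) :
    restrict X d x = some n ↔ x = some n ∧ n ∈ stalk X d := by
  simp only [restrict, Option.bind_eq_some_iff]
  constructor
  · rintro ⟨a, rfl, ha⟩
    by_cases h : a ∈ stalk X d
    · rw [if_pos h, Option.some_inj] at ha; subst ha; exact ⟨rfl, h⟩
    · rw [if_neg h] at ha; exact absurd ha (by simp)
  · rintro ⟨rfl, hn⟩
    exact ⟨n, rfl, by simp [hn]⟩

lemma unique_mem {N : Type*} {X : Set (Finset N)} {M : Set N}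
    (hM : M.Pairwise fun m n => Rset X m ∩ Rset X n = ∅)
    {m n : N} {c : Finset N} (hm : m ∈ M) (hn : n ∈ M)
    (hcm : c ∈ Rset X m) (hcn : c ∈ Rset X n) : m = n := by
  by_contra hne
  exact absurd (hM hm hn hne) (by
    intro h
    exact (Set.eq_empty_iff_forall_notMem.mp h c) ⟨hcm, hcn⟩)

/-- constancy: a global section equals `some n` on all of `Rset X n` once it does somewhere. -/
lemma section_const {N : Type*} {X : Set (Finset N)}
    (hdown : ∀ c ∈ X, ∀ b : Finset N, b.Nonempty → b ⊆ c → b ∈ X)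
    {s : {c : Finset N // c ∈ X} → Option N} (hs : IsGlobalSection X s)
    {c : {c : Finset N // c ∈ X}} {n : N} (hc : s c = some n)
    {b : Finset N} (hbX : b ∈ X) (hb : b ∈ Rset X n) : s ⟨b, hbX⟩ = some n := by
  obtain ⟨d, hdX, hcd, hnd⟩ := hs.1 c n hc
  have h1 : ({n} : Finset N) ∈ X :=
    hdown d hdX {n} (Finset.singleton_nonempty n) (Finset.singleton_subset_iff.mpr hnd)
  have hsd : s ⟨d, hdX⟩ = some n := by
    rw [← hs.2 c ⟨d, hdX⟩ hcd, hc, restrict_eq_some]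
    exact ⟨rfl, ⟨d, hdX, subset_refl d, hnd⟩⟩
  have hsn : s ⟨{n}, h1⟩ = some n := by
    have := hs.2 ⟨{n}, h1⟩ ⟨d, hdX⟩ (Finset.singleton_subset_iff.mpr hnd)
    rw [hsd, restrict_eq_some] at this
    exact this.1
  obtain ⟨_, e, heX, hbe, hne⟩ := hb
  have hse : s ⟨e, heX⟩ = some n := by
    rw [← hs.2 ⟨{n}, h1⟩ ⟨e, heX⟩ (Finset.singleton_subset_iff.mpr hne), hsn,
      restrict_eq_some]
    exact ⟨rfl, ⟨e, heX, subset_refl e, hne⟩⟩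
  have := hs.2 ⟨b, hbX⟩ ⟨e, heX⟩ hbe
  rw [hse, restrict_eq_some] at this
  exact this.1

noncomputable def invSec {N : Type*} (X : Set (Finset N)) (M : Set N) :
    {c : Finset N // c ∈ X} → Option N :=
  fun c => if h : ∃ n, n ∈ M ∧ c.1 ∈ Rset X n then some h.choose else none

lemma invSec_eq_some {N : Type*} {X : Set (Finset N)} {M : Set N}
    (hM : M.Pairwise fun m n => Rset X m ∩ Rset X n = ∅)
    (c : {c : Finset N // c ∈ X}) (n : N) :
    invSec X M c = some n ↔ n ∈ M ∧ c.1 ∈ Rset X n := by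
  unfold invSec
  split_ifs with h
  · constructor
    · rintro heq
      rw [Option.some_inj] at heq
      obtain ⟨hm, hc⟩ := h.choose_spec
      exact heq ▸ ⟨hm, hc⟩
    · rintro ⟨hn, hc⟩
      obtain ⟨hm, hcm⟩ := h.choose_spec
      rw [Option.some_inj]
      exact unique_mem hM hm hn hcm hc
  · simp only [false_iff]
    rintro ⟨hn, hc⟩
    exact h ⟨n, hn, hc⟩

lemma Rset_up {N : Type*} {X : Set (Finset N)} {n : N} {c d : Finset N}
    (hcX : c ∈ X) (hcd : c ⊆ d) (hd : d ∈ Rset X n) : c ∈ Rset X n := by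
  obtain ⟨_, f, hfX, hdf, hnf⟩ := hd
  exact ⟨hcX, f, hfX, hcd.trans hdf, hnf⟩

lemma invSec_isGlobalSection {N : Type*} {X : Set (Finset N)} {M : Set N}
    (hM : M.Pairwise fun m n => Rset X m ∩ Rset X n = ∅) :
    IsGlobalSection X (invSec X M) := by
  constructor
  · intro c n hc
    obtain ⟨_, ⟨_, d, hdX, hcd, hnd⟩⟩ := (invSec_eq_some hM c n).mp hc
    exact ⟨d, hdX, hcd, hnd⟩
  · intro c d hcd
    cases hsc : invSec X M c with
    | none =>
      simp only [restrict, Option.bind_none]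
      cases hsd : invSec X M d with
      | none => rfl
      | some m =>
        obtain ⟨hm, hdm⟩ := (invSec_eq_some hM d m).mp hsd
        have : invSec X M c = some m :=
          (invSec_eq_some hM c m).mpr ⟨hm, Rset_up c.2 hcd hdm⟩
        rw [hsc] at this; exact absurd this (by simp)
    | some n =>
      obtain ⟨hn, hcn⟩ := (invSec_eq_some hM c n).mp hsc
      by_cases hst : n ∈ stalk X d.1
      · have hdn : d.1 ∈ Rset X n := by
          obtain ⟨f, hfX, hdf, hnf⟩ := hst
          exact ⟨d.2, f, hfX, hdf, hnf⟩
        rw [(invSec_eq_some hM d n).mpr ⟨hn, hdn⟩]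
        simp [restrict, hst]
      · have hsd : invSec X M d = none := by
          cases hsd : invSec X M d with
          | none => rfl
          | some m =>
            obtain ⟨hm, hdm⟩ := (invSec_eq_some hM d m).mp hsd
            have hcm : c.1 ∈ Rset X m := Rset_up c.2 hcd hdm
            have : m = n := unique_mem hM hm hn hcm hcn
            subst this
            obtain ⟨_, f, hfX, hdf, hnf⟩ := hdm
            exact absurd ⟨f, hfX, hdf, hnf⟩ hst
        rw [hsd]
        simp [restrict, hst]

/-- The map sending a global section `s` of the activation sheaf to the
set `M(s) = {n | active(s,n) ≠ ∅}` of transmitting nodes is a bijection between the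
global sections of the activation sheaf and the sets `M` of vertices of `X` such that
`R(m) ∩ R(n) = ∅` for all distinct `m, n ∈ M`; the inverse sends such a set `M` to the
section with `s c = n` when `c ∈ R(n)` for the (necessarily unique) `n ∈ M`, and
`s c = ⊥` otherwise.  Thus the global sections of the activation sheaf are exactly the
sets of nodes that can transmit simultaneously without interference. -/
theorem sections_equiv_noninterfering_node_sets
    {N : Type*} (X : Set (Finset N))
    (hne : ∀ c ∈ X, c.Nonempty)
    (hdown : ∀ c ∈ X, ∀ b : Finset N, b.Nonempty → b ⊆ c → b ∈ X) :
    ∃ e : {s : {c : Finset N // c ∈ X} → Option N // IsGlobalSection X s} ≃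
          {M : Set N // (∀ n ∈ M, ({n} : Finset N) ∈ X) ∧
            M.Pairwise fun m n => Rset X m ∩ Rset X n = ∅},
      (∀ s : {s : {c : Finset N // c ∈ X} → Option N // IsGlobalSection X s},
        (e s).1 = {n : N | ∃ c : {c : Finset N // c ∈ X}, s.1 c = some n}) ∧
      (∀ M : {M : Set N // (∀ n ∈ M, ({n} : Finset N) ∈ X) ∧
            M.Pairwise fun m n => Rset X m ∩ Rset X n = ∅},
        ∀ (c : {c : Finset N // c ∈ X}) (n : N),
          (e.symm M).1 c = some n ↔ n ∈ M.1 ∧ c.1 ∈ Rset X n) := by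
  -- forward map properties
  have hfwd : ∀ s : {s : {c : Finset N // c ∈ X} → Option N // IsGlobalSection X s},
      (∀ n ∈ {n : N | ∃ c : {c : Finset N // c ∈ X}, s.1 c = some n},
        ({n} : Finset N) ∈ X) ∧
      ({n : N | ∃ c : {c : Finset N // c ∈ X}, s.1 c = some n}).Pairwise
        fun m n => Rset X m ∩ Rset X n = ∅ := by
    intro ⟨s, hs⟩
    constructor
    · rintro n ⟨c, hc⟩
      obtain ⟨d, hdX, _, hnd⟩ := hs.1 c n hc
      exact hdown d hdX {n} (Finset.singleton_nonempty n)
        (Finset.singleton_subset_iff.mpr hnd)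
    · rintro m ⟨c, hc⟩ n ⟨c', hc'⟩ hmn
      rw [Set.eq_empty_iff_forall_notMem]
      rintro b ⟨hbm, hbn⟩
      have hbX : b ∈ X := hbm.1
      have h1 := section_const hdown hs hc hbX hbm
      have h2 := section_const hdown hs hc' hbX hbn
      rw [h1] at h2
      exact hmn (Option.some_inj.mp h2)
  refine ⟨⟨fun s => ⟨{n : N | ∃ c, s.1 c = some n}, hfwd s⟩,
    fun M => ⟨invSec X M.1, invSec_isGlobalSection M.2.2⟩, ?_, ?_⟩, fun s => rfl,
    fun M c n => invSec_eq_some M.2.2 c n⟩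
  · rintro ⟨s, hs⟩
    ext c : 2
    set M : Set N := {n : N | ∃ c, s c = some n} with hMdef
    have hM : M.Pairwise fun m n => Rset X m ∩ Rset X n = ∅ := (hfwd ⟨s, hs⟩).2
    show invSec X M c = s c
    cases hsc : s c with
    | none =>
      cases hic : invSec X M c with
      | none => rfl
      | some m =>
        obtain ⟨hm, hcm⟩ := (invSec_eq_some hM c m).mp hic
        obtain ⟨c', hc'⟩ := hm
        have := section_const hdown hs hc' c.2 hcm
        rw [Subtype.coe_eta] at this
        rw [this] at hsc; exact absurd hsc (by simp)
    | some n =>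
      have hn : n ∈ M := ⟨c, hsc⟩
      have hcn : c.1 ∈ Rset X n := by
        obtain ⟨d, hdX, hcd, hnd⟩ := hs.1 c n hsc
        exact ⟨c.2, d, hdX, hcd, hnd⟩
      exact (invSec_eq_some hM c n).mpr ⟨hn, hcn⟩
  · rintro ⟨M, hMv, hM⟩
    ext n : 2
    simp only [Set.mem_setOf_eq]
    constructor
    · rintro ⟨c, hc⟩
      exact ((invSec_eq_some hM c n).mp hc).1
    · intro hn
      have h1 : ({n} : Finset N) ∈ X := hMv n hn
      refine ⟨⟨{n}, h1⟩, (invSec_eq_some hM ⟨{n}, h1⟩ n).mpr ⟨hn, ?_⟩⟩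
      exact ⟨h1, {n}, h1, subset_refl _, Finset.mem_singleton_self n⟩
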